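/- Let n ≥ 2 and let f : ℝ≥0 → ℝ ∪ {−∞} be a strictly increasing function. Then the following are equivalent: (a) for every positive-admitting integer-valued identical-good instance with n agents, every allocation chosen by the additive welfarist rule with f is EF1; (b) f satisfies Condition 3. -/

import Mathlib

/-!
For identical goods an allocation is determined by the bundle sizes `c t`, its welfare is
`∑ t, f (c t * z t)` where `z t` is agent `t`'s value for a good, and it is EF1 iff
`c j ≤ c i + 1` for all `i, j`. Moving one good from `j` to `i` changes the welfare by
`Δ_{f,c i}(z i) - Δ_{f,c j - 1}(z j)`; all terms are finite because a positive allocation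
exists and `f` is finite on `(0, ∞)`.

If Condition 3 holds, iterating it gives `Δ_{f,l}(a) < Δ_{f,k}(b)` whenever `k < l`, so a
maximiser with `c i + 2 ≤ c j` could be strictly improved. Conversely, if
`Δ_{f,k}(b) ≤ Δ_{f,k+1}(a)`, give `n (k + 1)` goods to agents valuing them `b, a, 1, …, 1`:
a maximiser is EF1, hence gives everybody `k + 1` goods, and moving one good from the first
agent to the second yields another maximiser, which is not EF1.
-/

open scoped BigOperators

noncomputable section

namespace FairDiv

/-- The bundle of goods received by agent `i` under the assignment `A` of goods to agents. -/
def bundle {n m : ℕ} (A : Fin m → Fin n) (i : Fin n) : Finset (Fin m) :=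
  Finset.univ.filter fun g => A g = i

/-- Additive utility of agent `i` for a set `S` of goods. -/
def util {n m : ℕ} (u : Fin n → Fin m → ℝ) (i : Fin n) (S : Finset (Fin m)) : ℝ :=
  ∑ g ∈ S, u i g

/-- Envy-freeness up to one good. -/
def EF1 {n m : ℕ} (u : Fin n → Fin m → ℝ) (A : Fin m → Fin n) : Prop :=
  ∀ i j : Fin n, bundle A j ≠ ∅ →
    ∃ g ∈ bundle A j, util u i ((bundle A j).erase g) ≤ util u i (bundle A i)

/-- Welfare of an allocation under the additive welfarist rule with function `f`. -/
def welfare {n m : ℕ} (f : ℝ → EReal) (u : Fin n → Fin m → ℝ) (A : Fin m → Fin n) : EReal :=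
  ∑ i : Fin n, f (util u i (bundle A i))

/-- An allocation is chosen by the additive welfarist rule with `f` if it maximizes welfare. -/
def Chosen {n m : ℕ} (f : ℝ → EReal) (u : Fin n → Fin m → ℝ) (A : Fin m → Fin n) : Prop :=
  ∀ B : Fin m → Fin n, welfare f u B ≤ welfare f u A

/-- An instance is positive-admitting if some allocation gives everyone positive utility. -/
def PositiveAdmitting {n m : ℕ} (u : Fin n → Fin m → ℝ) : Prop :=
  ∃ B : Fin m → Fin n, ∀ i : Fin n, 0 < util u i (bundle B i)

def IdenticalGood {n m : ℕ} (u : Fin n → Fin m → ℝ) : Prop :=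
  ∀ i : Fin n, ∃ a : ℝ, 0 < a ∧ ∀ g : Fin m, u i g = a

def TwoValue {n m : ℕ} (u : Fin n → Fin m → ℝ) : Prop :=
  ∃ a₁ a₂ : ℝ, a₁ ≠ a₂ ∧ 0 ≤ a₁ ∧ 0 ≤ a₂ ∧ ∀ i g, u i g = a₁ ∨ u i g = a₂

def Normalized {n m : ℕ} (u : Fin n → Fin m → ℝ) : Prop :=
  ∀ i j : Fin n, util u i Finset.univ = util u j Finset.univ

def IntegerValued {n m : ℕ} (u : Fin n → Fin m → ℝ) : Prop :=
  ∀ i g, ∃ z : ℕ, u i g = (z : ℝ)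

def Binary {n m : ℕ} (u : Fin n → Fin m → ℝ) : Prop :=
  ∀ i g, u i g = 0 ∨ u i g = 1

/-- `Δ_{f,k}(x) = f((k+1)x) − f(kx)`, valued in `EReal` (it is `+∞` iff `f(kx) = −∞`). -/
def Delta (f : ℝ → EReal) (k : ℕ) (x : ℝ) : EReal :=
  f (((k : ℝ) + 1) * x) - f ((k : ℝ) * x)

/-- Condition 1: `Δ_{f,k}(b) > Δ_{f,k+1}(a)` for all `k ∈ ℤ≥0` and `a, b ∈ ℝ>0`. -/
def Cond1 (f : ℝ → EReal) : Prop :=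
  ∀ k : ℕ, ∀ a b : ℝ, 0 < a → 0 < b → Delta f (k + 1) a < Delta f k b

/-- Condition 1a: `Δ_{f,k}` is constant on `ℝ>0` for every `k ∈ ℤ>0`. -/
def Cond1a (f : ℝ → EReal) : Prop :=
  ∀ k : ℕ, 0 < k → ∀ x y : ℝ, 0 < x → 0 < y → Delta f k x = Delta f k y

/-- Condition 2. -/
def Cond2 (f : ℝ → EReal) : Prop :=
  ∀ a b c d : ℝ, 0 ≤ a → 0 ≤ b → 0 ≤ c → 0 ≤ d →
    min a b ≤ min c d → a * b < c * d → f a + f b < f c + f d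

/-- Condition 3: `Δ_{f,k}(b) > Δ_{f,k+1}(a)` for all `k ∈ ℤ≥0` and `a, b ∈ ℤ>0`. -/
def Cond3 (f : ℝ → EReal) : Prop :=
  ∀ k : ℕ, ∀ a b : ℕ, 0 < a → 0 < b → Delta f (k + 1) (a : ℝ) < Delta f k (b : ℝ)

/-- Condition 3a. -/
def Cond3a (f : ℝ → EReal) : Prop :=
  ∀ k l : ℕ, l < k → ∀ a b : ℕ, 0 < a → 0 < b → Delta f k (a : ℝ) < Delta f l (b : ℝ)

/-- Condition 3b: `Δ_{f,k}(1) > Δ_{f,k+1}(a) > Δ_{f,k+2}(1)` for `k ∈ ℤ≥0`, `a ∈ ℤ>0`. -/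
def Cond3b (f : ℝ → EReal) : Prop :=
  ∀ k : ℕ, ∀ a : ℕ, 0 < a →
    Delta f (k + 1) (a : ℝ) < Delta f k 1 ∧ Delta f (k + 2) 1 < Delta f (k + 1) (a : ℝ)

/-- Condition 4: `Δ_{f,k}(1) > Δ_{f,k+1}(1)` for all `k ∈ ℤ≥0`. -/
def Cond4 (f : ℝ → EReal) : Prop :=
  ∀ k : ℕ, Delta f (k + 1) 1 < Delta f k 1

/-- Condition 5. -/
def Cond5 (f : ℝ → EReal) : Prop :=
  ∀ a b k l r : ℕ, 0 < a → 0 < b → b ≤ a → l * b + r * a < (k + 1) * b →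
    Delta f (k + 1) (a : ℝ) <
        f (((l : ℝ) + 1) * (b : ℝ) + (r : ℝ) * (a : ℝ)) - f ((l : ℝ) * (b : ℝ) + (r : ℝ) * (a : ℝ))
      ∧ Delta f (k + 2) 1 < Delta f (k + 1) (a : ℝ)

/-- Condition 6a: `f((k+1)b−1) − f(kb−1) > Δ_{f,k}(a)` for all `k, a, b ∈ ℤ>0`. -/
def Cond6a (f : ℝ → EReal) : Prop :=
  ∀ k a b : ℕ, 0 < k → 0 < a → 0 < b →
    Delta f k (a : ℝ) < f (((k : ℝ) + 1) * (b : ℝ) - 1) - f ((k : ℝ) * (b : ℝ) - 1)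

/-- Condition 6b: `f(y+b) − f(y) > f(x+a) − f(x)` whenever `x/a ≥ (y+1)/b`. -/
def Cond6b (f : ℝ → EReal) : Prop :=
  ∀ a b : ℕ, ∀ x y : ℕ, 0 < a → 0 < b → ((y : ℝ) + 1) / (b : ℝ) ≤ (x : ℝ) / (a : ℝ) →
    f ((x : ℝ) + (a : ℝ)) - f (x : ℝ) < f ((y : ℝ) + (b : ℝ)) - f (y : ℝ)

/-- Modified logarithmic function `λ_c(x) = log (x + c)`, with `log 0 = −∞`. -/
def lam (c : ℝ) (x : ℝ) : EReal :=
  if x + c = 0 then ⊥ else ((Real.log (x + c) : ℝ) : EReal)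

/-- The `p`-mean function `φ_p`, with `φ_p(0) = −∞` for `p ≤ 0`. -/
def phi (p : ℝ) (x : ℝ) : EReal :=
  if 0 < p then ((x ^ p : ℝ) : EReal)
  else if x = 0 then ⊥
  else if p = 0 then ((Real.log x : ℝ) : EReal)
  else ((-(x ^ p) : ℝ) : EReal)

/-- Modified harmonic number `h_c` on nonnegative integers. -/
def hmod (c : ℝ) (x : ℕ) : EReal :=
  if c = -1 then
    (if x = 0 then (⊥ : EReal)
     else (((∑ t ∈ Finset.range (x - 1), (1 : ℝ) / ((t : ℝ) + 1)) : ℝ) : EReal))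
  else (((∑ t ∈ Finset.range x, (1 : ℝ) / ((t : ℝ) + 1 + c)) : ℝ) : EReal)

/-- Condition 3b for a function defined on nonnegative integers. -/
def Cond3bNat (f : ℕ → EReal) : Prop :=
  ∀ k : ℕ, ∀ a : ℕ, 0 < a →
    f ((k + 2) * a) - f ((k + 1) * a) < f (k + 1) - f k
    ∧ f (k + 3) - f (k + 2) < f ((k + 2) * a) - f ((k + 1) * a)

end FairDiv

namespace EReal

theorem coe_finset_sum {ι : Type*} (s : Finset ι) (r : ι → ℝ) :
    ((∑ t ∈ s, r t : ℝ) : EReal) = ∑ t ∈ s, (r t : EReal) :=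
  map_sum (⟨⟨Real.toEReal, coe_zero⟩, coe_add⟩ : ℝ →+ EReal) r s

variable {ι : Type*} [Fintype ι] {x y : ι → EReal} {i j : ι}

theorem sum_le_sum_iff_of_eq_off_pair (hij : i ≠ j)
    (hx : ∀ t, x t ≠ ⊥ ∧ x t ≠ ⊤) (hy : ∀ t, y t ≠ ⊥ ∧ y t ≠ ⊤)
    (hxy : ∀ t, t ≠ i → t ≠ j → x t = y t) :
    ∑ t, x t ≤ ∑ t, y t ↔ x j - y j ≤ y i - x i := by
  obtain ⟨r, rfl⟩ : ∃ r : ι → ℝ, x = fun t => (r t : EReal) :=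
    ⟨fun t => (x t).toReal, funext fun t => (coe_toReal (hx t).2 (hx t).1).symm⟩
  obtain ⟨s, rfl⟩ : ∃ s : ι → ℝ, y = fun t => (s t : EReal) :=
    ⟨fun t => (y t).toReal, funext fun t => (coe_toReal (hy t).2 (hy t).1).symm⟩
  have hdiff : ∑ t, (s t - r t) = (s i - r i) + (s j - r j) :=
    Fintype.sum_eq_add i j hij fun t ht => by
      rw [sub_eq_zero, ← EReal.coe_eq_coe_iff]; exact (hxy t ht.1 ht.2).symm
  rw [Finset.sum_sub_distrib] at hdiff
  simp only [← coe_finset_sum, ← coe_sub, EReal.coe_le_coe_iff]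
  constructor <;> intro h <;> linarith

theorem sum_lt_sum_iff_of_eq_off_pair (hij : i ≠ j)
    (hx : ∀ t, x t ≠ ⊥ ∧ x t ≠ ⊤) (hy : ∀ t, y t ≠ ⊥ ∧ y t ≠ ⊤)
    (hxy : ∀ t, t ≠ i → t ≠ j → x t = y t) :
    ∑ t, x t < ∑ t, y t ↔ x j - y j < y i - x i := by
  rw [← not_le, ← not_le,
    sum_le_sum_iff_of_eq_off_pair hij.symm hy hx fun t hj hi => (hxy t hi hj).symm]

end EReal

namespace FairDiv

open Finset Function

theorem Cond3.delta_lt_of_lt {f : ℝ → EReal} (h3 : Cond3 f) {l k : ℕ} (hlk : l < k)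
    {a b : ℕ} (ha : 0 < a) (hb : 0 < b) : Delta f k a < Delta f l b := by
  induction k, hlk using Nat.le_induction generalizing a with
  | base => exact h3 l a b ha hb
  | succ k _ ih => exact (h3 k a 1 ha one_pos).trans (ih one_pos)

theorem eq_of_sum_eq_card_mul {ι : Type*} [Fintype ι] {c : ι → ℕ} {k : ℕ}
    (hsum : ∑ t, c t = Fintype.card ι * k) (hc : ∀ i j, c j ≤ c i + 1) (t : ι) : c t = k := by
  have hk : ∑ _s : ι, k = Fintype.card ι * k := by simp
  rcases lt_trichotomy (c t) k with h | h | h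
  · have : ∑ s, c s < ∑ _s : ι, k :=
      sum_lt_sum (fun s _ => (hc t s).trans h) ⟨t, mem_univ t, h⟩
    omega
  · exact h
  · have : ∑ _s : ι, k < ∑ s, c s :=
      sum_lt_sum (fun s _ => Nat.le_of_lt_succ (h.trans_le (hc s t))) ⟨t, mem_univ t, h⟩
    omega

section Bundles

variable {n m : ℕ}

theorem mem_bundle {A : Fin m → Fin n} {i : Fin n} {g : Fin m} :
    g ∈ bundle A i ↔ A g = i := by
  simp [bundle]

theorem sum_card_bundle (A : Fin m → Fin n) : ∑ i, #(bundle A i) = m := by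
  simpa [bundle] using (card_eq_sum_card_fiberwise (f := A) (s := univ) (t := univ)
    fun _ _ => mem_univ _).symm

variable {A : Fin m → Fin n} {g : Fin m} {i : Fin n}

theorem card_bundle_update_self (hi : A g ≠ i) :
    #(bundle (update A g i) i) = #(bundle A i) + 1 := by
  have : bundle (update A g i) i = insert g (bundle A i) := by
    ext g'; by_cases h : g' = g <;> simp [bundle, update_apply, h]
  rw [this, card_insert_of_notMem (by simpa [mem_bundle] using hi)]

theorem card_bundle_update_of_eq (hi : A g ≠ i) :
    #(bundle (update A g i) (A g)) = #(bundle A (A g)) - 1 := by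
  have : bundle (update A g i) (A g) = (bundle A (A g)).erase g := by
    ext g'; by_cases h : g' = g <;> simp [bundle, update_apply, h, hi.symm]
  rw [this, card_erase_of_mem (mem_bundle.2 rfl)]

theorem bundle_update_of_ne {t : Fin n} (hti : t ≠ i) (htg : t ≠ A g) :
    bundle (update A g i) t = bundle A t := by
  ext g'; by_cases h : g' = g <;> simp [bundle, update_apply, h, hti.symm, htg.symm]

end Bundles

section IdenticalGoods

variable {n m : ℕ} {u : Fin n → Fin m → ℝ} {z : Fin n → ℝ}

theorem util_eq_card_mul (hu : ∀ t g, u t g = z t) (t : Fin n) (S : Finset (Fin m)) :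
    util u t S = #S * z t := by
  simp [util, hu]

theorem EF1_iff_card_le (hz : ∀ t, 0 < z t) (hu : ∀ t g, u t g = z t) {A : Fin m → Fin n} :
    EF1 u A ↔ ∀ i j, #(bundle A j) ≤ #(bundle A i) + 1 := by
  refine forall₂_congr fun i j => ?_
  have key : ∀ g ∈ bundle A j, util u i ((bundle A j).erase g) ≤ util u i (bundle A i) ↔
      #(bundle A j) ≤ #(bundle A i) + 1 := fun g hg => by
    rw [util_eq_card_mul hu, util_eq_card_mul hu, mul_le_mul_iff_left₀ (hz i), Nat.cast_le,
      card_erase_of_mem hg]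
    have := card_pos.2 ⟨g, hg⟩
    omega
  rcases (bundle A j).eq_empty_or_nonempty with h | hne
  · simp [h]
  · have ⟨g, hg⟩ := hne
    simp only [ne_eq, hne.ne_empty, not_false_eq_true, forall_const]
    exact ⟨fun ⟨g', hg', h'⟩ => (key g' hg').1 h', fun h' => ⟨g, hg, (key g hg).2 h'⟩⟩

theorem exists_nat_values [Nonempty (Fin m)] (hint : IntegerValued u) (hid : IdenticalGood u) :
    ∃ z : Fin n → ℕ, (∀ t, 0 < z t) ∧ ∀ t g, u t g = z t := by
  obtain ⟨g₀⟩ := ‹Nonempty (Fin m)›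
  choose a ha hua using hid
  choose z hz using fun t => hint t g₀
  refine ⟨z, fun t => ?_, fun t g => by rw [hua, ← hz, hua]⟩
  have : (0 : ℝ) < z t := by rw [← hz, hua]; exact ha t
  exact_mod_cast this

theorem positiveAdmitting_of_le [NeZero n] (hnm : n ≤ m) (hz : ∀ t, 0 < z t)
    (hu : ∀ t g, u t g = z t) : PositiveAdmitting u := by
  let B : Fin m → Fin n := fun g => if h : g.val < n then ⟨g, h⟩ else 0
  have hB : ∀ t, Fin.castLE hnm t ∈ bundle B t := fun t => by simp [B, mem_bundle]
  refine ⟨B, fun t => ?_⟩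
  rw [util_eq_card_mul hu]
  exact mul_pos (Nat.cast_pos.2 (card_pos.2 ⟨_, hB t⟩)) (hz t)

end IdenticalGoods

section Welfare

variable {n m : ℕ} {f : ℝ → EReal} {u : Fin n → Fin m → ℝ}

theorem ne_bot_of_pos (hfmono : StrictMonoOn f (Set.Ici 0)) {x : ℝ} (hx : 0 < x) : f x ≠ ⊥ :=
  ne_bot_of_gt (hfmono Set.self_mem_Ici hx.le hx)

theorem exists_chosen [NeZero n] (f : ℝ → EReal) (u : Fin n → Fin m → ℝ) :
    ∃ A, Chosen f u A :=
  Finite.exists_max (welfare f u)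

theorem Chosen.ne_bot (hfmono : StrictMonoOn f (Set.Ici 0)) (hpos : PositiveAdmitting u)
    {A : Fin m → Fin n} (hA : Chosen f u A) (t : Fin n) : f (util u t (bundle A t)) ≠ ⊥ := by
  obtain ⟨B, hB⟩ := hpos
  have hwB : welfare f u B ≠ ⊥ := fun h => by
    obtain ⟨t, -, ht⟩ := WithBot.sum_eq_bot_iff.1 h
    exact ne_bot_of_pos hfmono (hB t) ht
  have hwA : welfare f u A ≠ ⊥ := ne_bot_of_le_ne_bot hwB (hA B)
  exact fun h => hwA (WithBot.sum_eq_bot_iff.2 ⟨t, mem_univ t, h⟩)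

variable {z : Fin n → ℝ} {A : Fin m → Fin n} {g : Fin m} {i : Fin n}

theorem sub_apply_util_update_self (hu : ∀ t g, u t g = z t) (hi : A g ≠ i) :
    f (util u i (bundle (update A g i) i)) - f (util u i (bundle A i)) =
      Delta f #(bundle A i) (z i) := by
  rw [util_eq_card_mul hu, util_eq_card_mul hu, card_bundle_update_self hi, Delta, Nat.cast_succ]

theorem sub_apply_util_update_of_eq (hu : ∀ t g, u t g = z t) (hi : A g ≠ i) :
    f (util u (A g) (bundle A (A g))) - f (util u (A g) (bundle (update A g i) (A g))) =
      Delta f (#(bundle A (A g)) - 1) (z (A g)) := by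
  rw [util_eq_card_mul hu, util_eq_card_mul hu, card_bundle_update_of_eq hi, Delta,
    Nat.cast_pred (card_pos.2 ⟨g, mem_bundle.2 rfl⟩), sub_add_cancel]

theorem apply_util_update_ne_bot (hfmono : StrictMonoOn f (Set.Ici 0)) (hz : ∀ t, 0 < z t)
    (hu : ∀ t g, u t g = z t) (hi : A g ≠ i) (hA : ∀ t, f (util u t (bundle A t)) ≠ ⊥)
    (hg : f (((#(bundle A (A g)) - 1 : ℕ) : ℝ) * z (A g)) ≠ ⊥) (t : Fin n) :
    f (util u t (bundle (update A g i) t)) ≠ ⊥ := by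
  rw [util_eq_card_mul hu]
  by_cases hti : t = i
  · subst hti
    rw [card_bundle_update_self hi]
    exact ne_bot_of_pos hfmono (mul_pos (Nat.cast_pos.2 (Nat.succ_pos _)) (hz t))
  by_cases htg : t = A g
  · subst htg
    rwa [card_bundle_update_of_eq hi]
  · rw [bundle_update_of_ne hti htg, ← util_eq_card_mul hu]
    exact hA t

theorem apply_util_ne_top (hftop : ∀ x : ℝ, 0 ≤ x → f x ≠ ⊤) (hz : ∀ t, 0 < z t)
    (hu : ∀ t g, u t g = z t) (t : Fin n) (S : Finset (Fin m)) : f (util u t S) ≠ ⊤ :=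
  hftop _ (by rw [util_eq_card_mul hu]; exact mul_nonneg (Nat.cast_nonneg _) (hz t).le)

theorem Delta_succ_lt_of_eq_bot (hfmono : StrictMonoOn f (Set.Ici 0))
    (hftop : ∀ x : ℝ, 0 ≤ x → f x ≠ ⊤) {k : ℕ} {a b : ℝ} (hkb : f (k * b) = ⊥) (ha : 0 < a)
    (hb : 0 < b) : Delta f (k + 1) a < Delta f k b := by
  have hb_top : Delta f k b = ⊤ := by
    rw [Delta, hkb, EReal.sub_bot (ne_bot_of_pos hfmono (by positivity))]
  rw [hb_top, Delta, sub_eq_add_neg]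
  exact EReal.add_lt_top (hftop _ (by positivity))
    (mt EReal.neg_eq_top_iff.1 (ne_bot_of_pos hfmono (by positivity)))

theorem welfare_le_welfare_update_iff (hfmono : StrictMonoOn f (Set.Ici 0))
    (hftop : ∀ x : ℝ, 0 ≤ x → f x ≠ ⊤) (hz : ∀ t, 0 < z t) (hu : ∀ t g, u t g = z t)
    (hi : A g ≠ i) (hA : ∀ t, f (util u t (bundle A t)) ≠ ⊥)
    (hg : f (((#(bundle A (A g)) - 1 : ℕ) : ℝ) * z (A g)) ≠ ⊥) :
    welfare f u A ≤ welfare f u (update A g i) ↔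
      Delta f (#(bundle A (A g)) - 1) (z (A g)) ≤ Delta f #(bundle A i) (z i) := by
  rw [welfare, welfare, EReal.sum_le_sum_iff_of_eq_off_pair (Ne.symm hi)
    (fun t => ⟨hA t, apply_util_ne_top hftop hz hu t _⟩)
    (fun t => ⟨apply_util_update_ne_bot hfmono hz hu hi hA hg t, apply_util_ne_top hftop hz hu t _⟩)
    (fun t hti htg => by rw [bundle_update_of_ne hti htg]),
    sub_apply_util_update_of_eq hu hi, sub_apply_util_update_self hu hi]

theorem welfare_lt_welfare_update_iff (hfmono : StrictMonoOn f (Set.Ici 0))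
    (hftop : ∀ x : ℝ, 0 ≤ x → f x ≠ ⊤) (hz : ∀ t, 0 < z t) (hu : ∀ t g, u t g = z t)
    (hi : A g ≠ i) (hA : ∀ t, f (util u t (bundle A t)) ≠ ⊥)
    (hg : f (((#(bundle A (A g)) - 1 : ℕ) : ℝ) * z (A g)) ≠ ⊥) :
    welfare f u A < welfare f u (update A g i) ↔
      Delta f (#(bundle A (A g)) - 1) (z (A g)) < Delta f #(bundle A i) (z i) := by
  rw [welfare, welfare, EReal.sum_lt_sum_iff_of_eq_off_pair (Ne.symm hi)
    (fun t => ⟨hA t, apply_util_ne_top hftop hz hu t _⟩)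
    (fun t => ⟨apply_util_update_ne_bot hfmono hz hu hi hA hg t, apply_util_ne_top hftop hz hu t _⟩)
    (fun t hti htg => by rw [bundle_update_of_ne hti htg]),
    sub_apply_util_update_of_eq hu hi, sub_apply_util_update_self hu hi]

end Welfare

section Characterization

variable {n m : ℕ} {f : ℝ → EReal}

theorem EF1_of_chosen (hfmono : StrictMonoOn f (Set.Ici 0))
    (hftop : ∀ x : ℝ, 0 ≤ x → f x ≠ ⊤) (h3 : Cond3 f) {u : Fin n → Fin m → ℝ}
    {z : Fin n → ℕ} (hz : ∀ t, 0 < z t) (hu : ∀ t g, u t g = z t) (hpos : PositiveAdmitting u)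
    {A : Fin m → Fin n} (hA : Chosen f u A) : EF1 u A := by
  have hzr : ∀ t, (0 : ℝ) < z t := fun t => Nat.cast_pos.2 (hz t)
  rw [EF1_iff_card_le hzr hu]
  intro i j
  by_contra! hij
  obtain ⟨g, hg⟩ : (bundle A j).Nonempty := card_pos.1 (by omega)
  have hgj : A g = j := mem_bundle.1 hg
  have hi : A g ≠ i := by rw [hgj]; rintro rfl; omega
  have hA' := hA.ne_bot hfmono hpos
  refine (hA (update A g i)).not_gt <|
    (welfare_lt_welfare_update_iff hfmono hftop hzr hu hi hA' ?_).2 ?_ <;> rw [hgj]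
  · exact ne_bot_of_pos hfmono (mul_pos (Nat.cast_pos.2 (by omega)) (hzr j))
  · exact h3.delta_lt_of_lt (by omega) (hz j) (hz i)

theorem cond3_of_forall_EF1 (hn : 2 ≤ n) (hfmono : StrictMonoOn f (Set.Ici 0))
    (hftop : ∀ x : ℝ, 0 ≤ x → f x ≠ ⊤)
    (H : ∀ m : ℕ, ∀ u : Fin n → Fin m → ℝ, (∀ i g, 0 ≤ u i g) →
        IntegerValued u → IdenticalGood u → PositiveAdmitting u →
        ∀ A : Fin m → Fin n, Chosen f u A → EF1 u A) :
    Cond3 f := by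
  intro k a b ha hb
  by_cases hkb : f (k * b) = ⊥
  · exact Delta_succ_lt_of_eq_bot hfmono hftop hkb (Nat.cast_pos.2 ha) (Nat.cast_pos.2 hb)
  by_contra! hle
  have : NeZero n := ⟨by omega⟩
  let i₀ : Fin n := ⟨0, by omega⟩
  let i₁ : Fin n := ⟨1, by omega⟩
  let z : Fin n → ℕ := fun t => if t = i₀ then b else if t = i₁ then a else 1
  have hz : ∀ t, (0 : ℝ) < z t := fun t => Nat.cast_pos.2 (by dsimp [z]; split_ifs <;> omega)
  have hz₀ : z i₀ = b := if_pos rfl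
  have hz₁ : z i₁ = a := by simp [z, i₀, i₁]
  let u : Fin n → Fin (n * (k + 1)) → ℝ := fun t _ => z t
  have hu : ∀ t g, u t g = z t := fun _ _ => rfl
  have hbalanced : ∀ A, Chosen f u A → ∀ i j, #(bundle A j) ≤ #(bundle A i) + 1 :=
    fun A hA => (EF1_iff_card_le hz hu).1 <| H _ u (fun t _ => (hz t).le)
      (fun t _ => ⟨z t, rfl⟩) (fun t => ⟨z t, hz t, fun _ => rfl⟩)
      (positiveAdmitting_of_le (Nat.le_mul_of_pos_right n k.succ_pos) hz hu) A hA
  obtain ⟨A, hA⟩ := exists_chosen f u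
  have hcard : ∀ t, #(bundle A t) = k + 1 :=
    eq_of_sum_eq_card_mul (by rw [sum_card_bundle, Fintype.card_fin]) (hbalanced A hA)
  obtain ⟨g, hg⟩ : (bundle A i₀).Nonempty := card_pos.1 (by rw [hcard]; omega)
  have hgi₀ : A g = i₀ := mem_bundle.1 hg
  have hi : A g ≠ i₁ := by rw [hgi₀]; simp [i₀, i₁, Fin.ext_iff]
  have hA' : Chosen f u (update A g i₁) := fun B => (hA B).trans <| by
    refine (welfare_le_welfare_update_iff hfmono hftop hz hu hi (fun t => ne_bot_of_pos hfmono
      (by rw [util_eq_card_mul hu, hcard]; exact mul_pos (by positivity) (hz t))) ?_).2 ?_ <;>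
      rw [hgi₀, hcard, Nat.add_sub_cancel, hz₀]
    · exact hkb
    · rwa [hcard, hz₁]
  have := hbalanced _ hA' i₀ i₁
  rw [card_bundle_update_self hi, ← hgi₀, card_bundle_update_of_eq hi, hcard, hcard] at this
  omega

end Characterization

theorem integer_idengood (n : ℕ) (hn : 2 ≤ n) (f : ℝ → EReal)
    (hfmono : StrictMonoOn f (Set.Ici (0 : ℝ)))
    (hftop : ∀ x : ℝ, 0 ≤ x → f x ≠ ⊤) :
    (∀ m : ℕ, ∀ u : Fin n → Fin m → ℝ, (∀ i g, 0 ≤ u i g) →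
        IntegerValued u → IdenticalGood u → PositiveAdmitting u →
        ∀ A : Fin m → Fin n, Chosen f u A → EF1 u A)
    ↔ Cond3 f := by
  refine ⟨cond3_of_forall_EF1 hn hfmono hftop, fun h3 m u _ hint hid hpos A hA => ?_⟩
  rcases isEmpty_or_nonempty (Fin m) with hm | hm
  · exact fun i j hj => absurd (eq_empty_of_isEmpty _) hj
  obtain ⟨z, hz, hu⟩ := exists_nat_values hint hid
  exact EF1_of_chosen hfmono hftop h3 hz hu hpos hA

end FairDiv
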